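/- In the toroidal (n+1)×(n+1) grid digraph with monotone diagonals, any closed directed walk W with at most 2n horizontal arcs and exactly n vertical arcs admits a directed cycle Γ consisting only of diagonal arcs such that W crosses Γ at most once. -/

import Mathlib

/-- Directions of arcs in the grid digraph with monotone diagonals. -/
inductive GridDir | H | V | D
deriving DecidableEq

/-- The displacement of an arc of the toroidal grid digraph on `(ℤ/n) × (ℤ/n)`. -/
def dirVec (n : ℕ) : GridDir → ZMod n × ZMod n
  | .H => (1, 0)
  | .V => (0, 1)
  | .D => (1, 1)

/-- The side, relative to the diagonal line through a vertex (in the natural toroidal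
embedding), of the ray along which a walk *leaves* the vertex: an outgoing horizontal arc
leaves strictly below the diagonal (`-1`), an outgoing vertical arc strictly above (`1`),
and an outgoing diagonal arc along it (`0`). -/
def outSide : GridDir → ℤ
  | .H => -1
  | .V => 1
  | .D => 0

/-- The side of the ray along which a walk *arrives* at a vertex (the reversed ray). -/
def inSide (d : GridDir) : ℤ := - outSide d

/-- The vertex set of the diagonal cycle `Γ_c = {(i, i + c)}` of the toroidal grid digraph. -/
def OnDiagCycle (n : ℕ) (c : ZMod n) (p : ZMod n × ZMod n) : Prop := p.2 = p.1 + c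


/-!
Call `j - i` the level of the vertex `(i, j)`, so that `Γ_c` is the set of vertices of level `c`:
a horizontal arc lowers the level by one, a vertical arc raises it, a diagonal arc keeps it, and
the walk crosses `Γ_c` exactly when it passes straight through level `c` along two horizontal or
two vertical arcs. Since the walk is closed, as many arcs enter each level as leave it, so the net
number `(vertical arcs into c) - (horizontal arcs into c - 1)` of passages from level `c - 1` to
level `c` is the same for every `c`; summed over the `n` levels it is `n - #H ≥ -n`, hence it is
at least `-1` everywhere. A level entered by no vertical arc is therefore crossed at most once.
Otherwise every level is entered by exactly one vertical arc. If there are horizontal arcs, some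
vertical arc is followed, after a run of diagonal arcs, by a horizontal one; the level between
them is crossed at most once, because its only vertical arrival does not go on vertically and at
most two horizontal arcs leave it, one of which does not continue a horizontal passage.
-/

open Finset

lemma inSide_mul_outSide_eq_neg_one_iff (d d' : GridDir) :
    inSide d * outSide d' = -1 ↔ d = .H ∧ d' = .H ∨ d = .V ∧ d' = .V := by
  cases d <;> cases d' <;> decide

def level {n : ℕ} (p : ZMod n × ZMod n) : ZMod n := p.2 - p.1

lemma level_add_dirVec {n : ℕ} (p : ZMod n × ZMod n) (d : GridDir) :
    level (p + dirVec n d) = level p + outSide d := by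
  cases d <;> simp only [level, dirVec, outSide, Prod.fst_add, Prod.snd_add] <;> push_cast <;> ring

lemma onDiagCycle_iff_level_eq {n : ℕ} {c : ZMod n} {p : ZMod n × ZMod n} :
    OnDiagCycle n c p ↔ level p = c :=
  sub_eq_iff_eq_add'.symm

lemma ZMod.apply_eq_apply_zero_of_add_one {n : ℕ} {α : Type*} {f : ZMod n → α}
    (h : ∀ c, f (c + 1) = f c) (c : ZMod n) : f c = f 0 := by
  obtain ⟨k, rfl⟩ := ZMod.intCast_surjective c
  induction k with
  | zero => simp
  | succ k ih => push_cast at ih ⊢; rw [h, ih]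
  | pred k ih => rw [← ih, ← h]; push_cast; ring_nf

lemma Finset.card_filter_add_right {ι : Type*} [AddGroup ι] [Fintype ι] (p : ι → Prop)
    [DecidablePred p] (a : ι) : #{t | p (t + a)} = #{t | p t} := by
  simp only [card_filter]
  exact Equiv.sum_comp (Equiv.addRight a) (fun t => if p t then 1 else 0)

lemma exists_V_diagonal_run_H {g : ℕ → GridDir} (h0 : g 0 = .V) {j : ℕ} (hj : g j = .H) :
    ∃ i k, i < k ∧ g i = .V ∧ (∀ l, i < l → l < k → g l = .D) ∧ g k = .H := by
  classical
  have hex : ∃ k, g k = .H := ⟨j, hj⟩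
  have hk : g (Nat.find hex) = .H := Nat.find_spec hex
  have hi : g (Nat.findGreatest (g · = .V) (Nat.find hex)) = .V :=
    Nat.findGreatest_spec (P := (g · = .V)) (Nat.zero_le _) h0
  refine ⟨_, _, (Nat.findGreatest_le _).lt_of_ne fun h => ?_, hi, fun l hil hlk => ?_, hk⟩
  · rw [h, hk] at hi
    cases hi
  · have hV := Nat.findGreatest_is_greatest hil hlk.le
    have hH := Nat.find_min hex hlk
    cases h : g l <;> simp_all

lemma level_eq_of_diagonal_run {n : ℕ} {g : ℕ → GridDir} {L : ℕ → ZMod n}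
    (hL : ∀ l, L (l + 1) = L l + outSide (g l)) {i k : ℕ} (hik : i < k)
    (hD : ∀ l, i < l → l < k → g l = .D) : L k = L (i + 1) := by
  induction k, hik using Nat.le_induction with
  | base => rfl
  | succ k hk ih =>
    rw [hL, hD k hk (lt_add_one k), ih fun l h1 h2 => hD l h1 (by omega)]
    simp [outSide]

section ClosedWalk

variable {m n : ℕ} (dir : Fin (m + 1) → GridDir) (F : Fin (m + 1) → ZMod n)

def arrivals (d : GridDir) (c : ZMod n) : ℕ := #{t | dir t = d ∧ F (t + 1) = c}

def straightPasses (d : GridDir) (c : ZMod n) : ℕ :=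
  #{t | dir t = d ∧ dir (t + 1) = d ∧ F (t + 1) = c}

lemma card_filter_split_by_dir (P : Fin (m + 1) → Prop) [DecidablePred P] :
    #{t | P t} = #{t | dir t = .H ∧ P t} + #{t | dir t = .V ∧ P t} + #{t | dir t = .D ∧ P t} := by
  simp only [card_filter, ← sum_add_distrib]
  refine sum_congr rfl fun t _ => ?_
  cases dir t <;> simp

lemma sum_arrivals [NeZero n] (d : GridDir) : ∑ c, arrivals dir F d c = #{t | dir t = d} := by
  rw [card_eq_sum_card_fiberwise (f := fun t => F (t + 1)) (t := univ) fun _ _ => mem_univ _]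
  simp only [arrivals, filter_filter]

lemma straightPasses_le_arrivals (d : GridDir) (c : ZMod n) :
    straightPasses dir F d c ≤ arrivals dir F d c :=
  card_le_card fun t => by simp only [mem_filter]; tauto

lemma straightPasses_eq_card (d : GridDir) (c : ZMod n) :
    straightPasses dir F d c = #{u ∈ {u | dir u = d ∧ F u = c} | dir (u - 1) = d} := by
  rw [filter_filter, ← card_filter_add_right _ 1]
  simp only [straightPasses, add_sub_cancel_right]
  congr 1
  exact filter_congr fun t _ => by tauto

variable {dir F}

lemma straightPasses_eq_zero_of_arrivals_eq_one {d : GridDir} {s : Fin (m + 1)}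
    (hs : dir s = d) (hnext : dir (s + 1) ≠ d) (h1 : arrivals dir F d (F (s + 1)) = 1) :
    straightPasses dir F d (F (s + 1)) = 0 := by
  refine card_eq_zero.2 <| filter_eq_empty_iff.2 fun t _ ht => hnext ?_
  have hts : t = s := card_le_one.1 h1.le t (by simp [ht.1, ht.2.2]) s (by simp [hs])
  exact hts ▸ ht.2.1

lemma card_departures (hF : ∀ t, F (t + 1) = F t + outSide (dir t)) (d : GridDir) (c : ZMod n) :
    #{t | dir t = d ∧ F t = c} = arrivals dir F d (c + outSide d) := by
  unfold arrivals
  congr 1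
  refine filter_congr fun t _ => and_congr_right fun hd => ?_
  rw [hF, hd, add_left_inj]

lemma card_departures_H (hF : ∀ t, F (t + 1) = F t + outSide (dir t)) (c : ZMod n) :
    #{t | dir t = .H ∧ F t = c} = arrivals dir F .H (c - 1) := by
  simp [card_departures hF, outSide, sub_eq_add_neg]

lemma arrivals_add_one_add_arrivals_sub_one (hF : ∀ t, F (t + 1) = F t + outSide (dir t))
    (c : ZMod n) :
    arrivals dir F .V (c + 1) + arrivals dir F .H (c - 1) =
      arrivals dir F .V c + arrivals dir F .H c := by
  have hin := card_filter_split_by_dir dir fun t => F (t + 1) = c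
  have hout := card_filter_split_by_dir dir fun t => F t = c
  simp only [card_departures hF, outSide, Int.cast_neg, Int.cast_one, Int.cast_zero, add_zero,
    ← sub_eq_add_neg] at hout
  rw [card_filter_add_right (fun t => F t = c) 1] at hin
  change _ = arrivals dir F .H c + arrivals dir F .V c + arrivals dir F .D c at hin
  omega

lemma arrivals_H_sub_one_le [NeZero n] (hF : ∀ t, F (t + 1) = F t + outSide (dir t))
    (hH : #{t | dir t = .H} ≤ 2 * n) (hV : #{t | dir t = .V} = n) (c : ZMod n) :
    arrivals dir F .H (c - 1) ≤ arrivals dir F .V c + 1 := by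
  let flux (c : ZMod n) : ℤ := arrivals dir F .V c - arrivals dir F .H (c - 1)
  have hflux : ∀ c, flux c = flux 0 := ZMod.apply_eq_apply_zero_of_add_one fun c => by
    have := arrivals_add_one_add_arrivals_sub_one hF c
    simp only [flux, add_sub_cancel_right]
    omega
  have hsum : (n : ℤ) * flux 0 = n - #{t | dir t = .H} := by
    have hshift := Equiv.sum_comp (Equiv.subRight 1) fun c => (arrivals dir F .H c : ℤ)
    calc (n : ℤ) * flux 0 = ∑ c, flux c := by simp [hflux, ZMod.card]
      _ = n - #{t | dir t = .H} := by
        simp only [flux, sum_sub_distrib, Equiv.subRight_apply] at hshift ⊢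
        rw [hshift]
        exact_mod_cast congr_arg₂ _ (hV ▸ sum_arrivals dir F .V) (sum_arrivals dir F .H)
  have hn : (0 : ℤ) < n := by exact_mod_cast NeZero.pos n
  have hc : -1 ≤ flux c := hflux c ▸ by nlinarith
  simp only [flux] at hc
  omega

lemma straightPasses_H_le (hF : ∀ t, F (t + 1) = F t + outSide (dir t)) (c : ZMod n) :
    straightPasses dir F .H c ≤ arrivals dir F .H (c - 1) := by
  rw [straightPasses_eq_card, ← card_departures_H hF]
  exact card_le_card (filter_subset _ _)

lemma straightPasses_H_lt (hF : ∀ t, F (t + 1) = F t + outSide (dir t)) {t : Fin (m + 1)}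
    (ht : dir t = .H) (hprev : dir (t - 1) ≠ .H) :
    straightPasses dir F .H (F t) < arrivals dir F .H (F t - 1) := by
  rw [straightPasses_eq_card, ← card_departures_H hF]
  exact card_lt_card <| filter_ssubset.2 ⟨t, by simp [ht], hprev⟩

open Fin.CommRing in
lemma exists_V_H_on_same_level (hF : ∀ t, F (t + 1) = F t + outSide (dir t))
    {s₀ u : Fin (m + 1)} (hs₀ : dir s₀ = .V) (hu : dir u = .H) :
    ∃ s t, dir s = .V ∧ dir (s + 1) ≠ .V ∧ dir t = .H ∧ dir (t - 1) ≠ .H ∧ F t = F (s + 1) := by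
  let g (l : ℕ) : GridDir := dir (s₀ + (l : Fin (m + 1)))
  obtain ⟨i, k, hik, hi, hD, hk⟩ := exists_V_diagonal_run_H (g := g) (j := (u - s₀).val)
    (by simpa [g] using hs₀) (by simpa [g, Fin.cast_val_eq_self] using hu)
  have hL := level_eq_of_diagonal_run (L := fun l => F (s₀ + (l : Fin (m + 1))))
    (fun l => by simp only [g, Nat.cast_succ, ← add_assoc, hF]) hik hD
  refine ⟨s₀ + (i : Fin (m + 1)), s₀ + (k : Fin (m + 1)), hi, ?_, hk, ?_,
    by simpa [add_assoc] using hL⟩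
  · have : g (i + 1) ≠ .V := by
      rcases (show i + 1 ≤ k from hik).lt_or_eq with h | h
      · rw [hD _ (lt_add_one i) h]; decide
      · rw [h, hk]; decide
    simpa [g, add_assoc] using this
  · have : g (k - 1) ≠ .H := by
      rcases (Nat.le_sub_one_of_lt hik).lt_or_eq with h | h
      · rw [hD _ h (by omega)]; decide
      · rw [← h, hi]; decide
    simpa [g, Nat.cast_sub (by omega : 1 ≤ k), add_sub_assoc] using this

lemma exists_straightPasses_add_le_one [NeZero n] (hF : ∀ t, F (t + 1) = F t + outSide (dir t))
    (hH : #{t | dir t = .H} ≤ 2 * n) (hV : #{t | dir t = .V} = n) :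
    ∃ c, straightPasses dir F .H c + straightPasses dir F .V c ≤ 1 := by
  have hHV := arrivals_H_sub_one_le hF hH hV
  by_cases h0 : ∃ c, arrivals dir F .V c = 0
  · obtain ⟨c, hc⟩ := h0
    have := straightPasses_H_le hF c
    have := straightPasses_le_arrivals dir F .V c
    have := hHV c
    exact ⟨c, by omega⟩
  push Not at h0
  have h1 : ∀ c, arrivals dir F .V c = 1 := fun c =>
    ((sum_eq_sum_iff_of_le fun c _ => Nat.one_le_iff_ne_zero.2 (h0 c)).1
      (by simp [sum_arrivals, hV, ZMod.card]) c (mem_univ c)).symm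
  by_cases hHex : ∃ u, dir u = .H
  · obtain ⟨u, hu⟩ := hHex
    obtain ⟨s₀, hs₀⟩ : ∃ s, dir s = .V := by
      obtain ⟨s, hs⟩ := card_pos.1 (hV ▸ NeZero.pos n)
      exact ⟨s, (mem_filter.1 hs).2⟩
    obtain ⟨s, t, hs, hs', ht, ht', hst⟩ := exists_V_H_on_same_level hF hs₀ hu
    have := straightPasses_H_lt hF ht ht'
    have := straightPasses_eq_zero_of_arrivals_eq_one hs hs' (h1 _)
    have := hHV (F t)
    have := h1 (F t)
    rw [hst] at *
    exact ⟨F (s + 1), by omega⟩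
  · push Not at hHex
    have hH0 : straightPasses dir F .H 0 = 0 :=
      card_eq_zero.2 <| filter_eq_empty_iff.2 fun t _ ht => hHex t ht.1
    have := straightPasses_le_arrivals dir F .V 0
    have := h1 0
    exact ⟨0, by omega⟩

end ClosedWalk

lemma ncard_crossings_le {m n : ℕ} (tail : Fin (m + 1) → ZMod n × ZMod n)
    (dir : Fin (m + 1) → GridDir) (c : ZMod n) :
    {t : Fin (m + 1) | OnDiagCycle n c (tail (t + 1)) ∧
        inSide (dir t) * outSide (dir (t + 1)) = -1}.ncard ≤
      straightPasses dir (level ∘ tail) .H c + straightPasses dir (level ∘ tail) .V c := by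
  refine le_of_eq_of_le ?_ (card_union_le _ _)
  rw [← Set.ncard_coe_finset]
  congr 1
  ext t
  simp only [Set.mem_ofPred_eq, coe_union, coe_filter, mem_univ, true_and, Set.mem_union,
    onDiagCycle_iff_level_eq, inSide_mul_outSide_eq_neg_one_iff, Function.comp_apply]
  tauto

/-- A closed directed walk of the toroidal `(n+1) × (n+1)` grid digraph
(vertices `(ℤ/n) × (ℤ/n)` after identification) with at most `2n` horizontal arcs and exactly
`n` vertical arcs admits a diagonal cycle `Γ` crossed at most once: at most one pair of
consecutive arcs of the walk meets a vertex of `Γ` with its two rays strictly on opposite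
sides of `Γ`. The walk is given by the tails `tail t` and directions `dir t` of its arcs,
indexed cyclically by `Fin (m+1)`. -/
theorem diagonal_cycle_crossed_at_most_once (n m : ℕ) (hn : 0 < n)
    (tail : Fin (m + 1) → ZMod n × ZMod n) (dir : Fin (m + 1) → GridDir)
    (hclosed : ∀ t : Fin (m + 1), tail (t + 1) = tail t + dirVec n (dir t))
    (hH : (Finset.univ.filter fun t => dir t = GridDir.H).card ≤ 2 * n)
    (hV : (Finset.univ.filter fun t => dir t = GridDir.V).card = n) :
    ∃ c : ZMod n,
      {t : Fin (m + 1) | OnDiagCycle n c (tail (t + 1)) ∧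
        inSide (dir t) * outSide (dir (t + 1)) = -1}.ncard ≤ 1 := by
  have : NeZero n := ⟨hn.ne'⟩
  have hF : ∀ t, (level ∘ tail) (t + 1) = (level ∘ tail) t + outSide (dir t) := fun t => by
    simp only [Function.comp_apply, hclosed, level_add_dirVec]
  obtain ⟨c, hc⟩ := exists_straightPasses_add_le_one hF hH hV
  exact ⟨c, (ncard_crossings_le tail dir c).trans hc⟩
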